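/- arXiv:0704.2282 — 2 statements merged into one kernel-verified Lean document; each statement's English description precedes it below -/
import Mathlib

section
/- Let G be a graph with n ≥ 2 nodes. For each node v of G let p_v be a new node (the p_v pairwise distinct and not among the nodes of G), and let G' = G ∪ { {v, p_v} : v a node of G }. If G' is omniconjugated, then every two distinct nodes of G are joined by an edge of G, i.e. G is a complete graph on its node set. -/
open scoped symmDiff

namespace Kekule

abbrev Node := ℕ
abbrev Graph := Finset (Finset Node)

/-- `G` is a graph: every edge is a 2-element set of nodes. -/
def IsGraph (G : Graph) : Prop := ∀ e ∈ G, e.card = 2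

/-- The nodes of a graph: the elements of its edges. -/
def nodes (G : Graph) : Finset Node := G.biUnion id

/-- The number of edges of `G` containing `v`. -/
def deg (G : Graph) (v : Node) : ℕ := (G.filter (fun e => v ∈ e)).card

/-- A port is a node contained in exactly one edge. -/
def ports (G : Graph) : Finset Node := (nodes G).filter (fun v => deg G v = 1)

/-- An internal node is a node that is not a port. -/
def internal (G : Graph) : Finset Node := (nodes G).filter (fun v => deg G v ≠ 1)

/-- A Kekulé state of `G`: a subgraph `W ⊆ G` such that every internal node
of `G` lies in exactly one edge of `W`. -/
def IsKekule (G W : Graph) : Prop := W ⊆ G ∧ ∀ v ∈ internal G, deg W v = 1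

/-- A curve in `G`: a subgraph `C ⊆ G` such that every node of `C` that is
internal in `G` lies in exactly two edges of `C`. -/
def IsCurve (G C : Graph) : Prop :=
  C ⊆ G ∧ ∀ v ∈ nodes C, v ∈ internal G → deg C v = 2

/-- `(C, W)` is an alternating curve in `G`: both are subgraphs of `G`,
`C` is a curve in `G`, and `W ∩ C` is a Kekulé state of `C`. -/
def IsAlternating (G C W : Graph) : Prop :=
  W ⊆ G ∧ IsCurve G C ∧ IsKekule C (W ∩ C)

/-- `W|P`: the set of ports in `P` that lie in some edge of `W`. -/
def rest (W : Graph) (P : Finset Node) : Finset Node := P ∩ nodes W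

/-- The set of Kekulé port assignments of `G`. -/
def KP (G : Graph) : Set (Finset Node) :=
  {g | ∃ W, IsKekule G W ∧ rest W (ports G) = g}

/-- A cell `K` over `P` is a Kekulé cell if it is the set of Kekulé port
assignments of some graph with port set `P`. -/
def IsKekuleCell (P : Finset Node) (K : Set (Finset Node)) : Prop :=
  ∃ G, IsGraph G ∧ ports G = P ∧ KP G = K

/-- A channel: a 2-element subset of `P`. -/
def IsChannel (P : Finset Node) (c : Finset Node) : Prop := c ⊆ P ∧ c.card = 2

/-- A port `p` is flexible for a cell `K`. -/
def Flexible (K : Set (Finset Node)) (p : Node) : Prop :=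
  ∃ g ∈ K, ∃ g' ∈ K, p ∈ g ∧ p ∉ g'

/-- Hamming distance between two port assignments. -/
def hdist (k k' : Finset Node) : ℕ := (k ∆ k').card

/-- The Hamming diameter of `K` equals `n`. -/
def HamDiamEq (K : Set (Finset Node)) (n : ℕ) : Prop :=
  (∃ k ∈ K, ∃ k' ∈ K, hdist k k' = n) ∧ ∀ k ∈ K, ∀ k' ∈ K, hdist k k' ≤ n

/-- `G` is connected: nonempty, and any two distinct nodes are joined by a walk. -/
def Connected (G : Graph) : Prop :=
  G.Nonempty ∧ ∀ p ∈ nodes G, ∀ q ∈ nodes G, p ≠ q →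
    ∃ (n : ℕ) (f : ℕ → Node), f 0 = p ∧ f n = q ∧
      ∀ i < n, ({f i, f (i + 1)} : Finset Node) ∈ G

/-- `C` is a simple path between `p` and `q`. -/
def IsSimplePath (C : Graph) (p q : Node) : Prop :=
  Connected C ∧ ports C = {p, q} ∧
    ∀ v ∈ nodes C, v ≠ p → v ≠ q → deg C v = 2

/-- A cycle: a connected graph all of whose nodes lie in exactly two edges. -/
def IsCycle (C : Graph) : Prop :=
  Connected C ∧ ∀ v ∈ nodes C, deg C v = 2

/-- A semi-Kekulé state of `G`: every internal node of `G` lies in an odd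
number of edges of `W`. -/
def IsSemiKekule (G W : Graph) : Prop :=
  W ⊆ G ∧ ∀ v ∈ internal G, deg W v % 2 = 1

/-- The signature of `G`. -/
def sig (G : Graph) : ℕ := (internal G).card % 2

/-- `G` is omniconjugated. -/
def Omniconjugated (G : Graph) : Prop :=
  2 ≤ (ports G).card ∧ KP G = {g | g ⊆ ports G ∧ g.card % 2 = sig G}

instance : Std.Commutative (α := Finset Node) (· ∆ ·) := ⟨symmDiff_comm⟩
instance : Std.Associative (α := Finset Node) (· ∆ ·) := ⟨symmDiff_assoc⟩

/-- The `⊕`-sum of a finite family of port assignments. -/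
def xorSum (D : Finset (Finset Node)) : Finset Node := D.fold (· ∆ ·) ∅ id

/-!
Let `G'` be `G` with a new port `p_w` attached at every node `w`. Its internal nodes are the
nodes of `G` and its ports are the `p_w`; as there are equally many of each, omniconjugacy
provides, for distinct nodes `u, v`, a Kekulé state `W` of `G'` covering exactly the ports other
than `p_u, p_v`. Then `W` contains every pendant edge `{w, p_w}` with `w ≠ u, v`, but not
`{u, p_u}`. Hence the unique `W`-edge at `u` is an edge `{u, x}` of `G`, and `x` cannot be a
node `w ≠ u, v` (already covered by `{w, p_w}`), so `x = v`.
-/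

open Finset

lemma mem_nodes_of_mem {G : Graph} {e : Finset Node} {x : Node} (he : e ∈ G) (hx : x ∈ e) :
    x ∈ nodes G :=
  mem_biUnion.2 ⟨e, he, hx⟩

lemma IsKekule.eq_of_mem {G W : Graph} (hW : IsKekule G W) {v : Node} (hv : v ∈ internal G)
    {e e' : Finset Node} (he : e ∈ W) (he' : e' ∈ W) (hve : v ∈ e) (hve' : v ∈ e') :
    e = e' :=
  card_le_one.1 (hW.2 v hv).le e (mem_filter.2 ⟨he, hve⟩) e' (mem_filter.2 ⟨he', hve'⟩)

lemma IsKekule.exists_mem {G W : Graph} (hW : IsKekule G W) {v : Node} (hv : v ∈ internal G) :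
    ∃ e ∈ W, v ∈ e := by
  obtain ⟨e, he⟩ := card_pos.1 (hW.2 v hv ▸ Nat.one_pos)
  exact ⟨e, (mem_filter.1 he).1, (mem_filter.1 he).2⟩

lemma exists_eq_pair_of_card_eq_two {e : Finset Node} (he : e.card = 2) {u : Node}
    (hu : u ∈ e) : ∃ x, x ≠ u ∧ e = {u, x} := by
  obtain ⟨a, b, hab, rfl⟩ := card_eq_two.1 he
  simp only [mem_insert, mem_singleton] at hu
  rcases hu with rfl | rfl
  · exact ⟨b, hab.symm, rfl⟩
  · exact ⟨a, hab, pair_comm _ _⟩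

def attachPorts (G : Graph) (pmap : Node → Node) : Graph :=
  G ∪ (nodes G).image (fun v => ({v, pmap v} : Finset Node))

section attachPorts

variable {G : Graph} {pmap : Node → Node}

lemma mem_attachPorts {e : Finset Node} :
    e ∈ attachPorts G pmap ↔ e ∈ G ∨ ∃ w ∈ nodes G, {w, pmap w} = e := by
  simp only [attachPorts, mem_union, mem_image]

lemma mem_attachPorts_of_mem {e : Finset Node} (he : e ∈ G) : e ∈ attachPorts G pmap :=
  mem_attachPorts.2 (Or.inl he)

lemma pendant_mem_attachPorts {w : Node} (hw : w ∈ nodes G) :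
    {w, pmap w} ∈ attachPorts G pmap :=
  mem_attachPorts.2 (Or.inr ⟨w, hw, rfl⟩)

lemma nodes_attachPorts : nodes (attachPorts G pmap) = nodes G ∪ (nodes G).image pmap := by
  ext x
  simp only [nodes, attachPorts, mem_biUnion, mem_union, mem_image, id]
  constructor
  · rintro ⟨e, he | ⟨w, hw, rfl⟩, hxe⟩
    · exact Or.inl ⟨e, he, hxe⟩
    · simp only [mem_insert, mem_singleton] at hxe
      rcases hxe with rfl | rfl
      · exact Or.inl hw
      · exact Or.inr ⟨w, hw, rfl⟩
  · rintro (⟨e, he, hxe⟩ | ⟨w, hw, rfl⟩)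
    · exact ⟨e, Or.inl he, hxe⟩
    · exact ⟨{w, pmap w}, Or.inr ⟨w, hw, rfl⟩, by simp⟩

lemma eq_pendant_of_pmap_mem (hinj : Set.InjOn pmap (nodes G))
    (hnew : ∀ v ∈ nodes G, pmap v ∉ nodes G) {w : Node} (hw : w ∈ nodes G) {e : Finset Node}
    (he : e ∈ attachPorts G pmap) (hpe : pmap w ∈ e) : e = {w, pmap w} := by
  rcases mem_attachPorts.1 he with heG | ⟨x, hx, rfl⟩
  · exact absurd (mem_nodes_of_mem heG hpe) (hnew w hw)
  · rcases mem_insert.1 hpe with h | h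
    · exact absurd (h ▸ hx) (hnew w hw)
    · rw [hinj hw hx (mem_singleton.1 h)]

lemma deg_attachPorts_pmap (hinj : Set.InjOn pmap (nodes G))
    (hnew : ∀ v ∈ nodes G, pmap v ∉ nodes G) {w : Node} (hw : w ∈ nodes G) :
    deg (attachPorts G pmap) (pmap w) = 1 := by
  rw [deg, card_eq_one]
  refine ⟨{w, pmap w}, eq_singleton_iff_unique_mem.2 ⟨?_, ?_⟩⟩
  · exact mem_filter.2 ⟨pendant_mem_attachPorts hw, by simp⟩
  · exact fun e he => eq_pendant_of_pmap_mem hinj hnew hw (mem_filter.1 he).1 (mem_filter.1 he).2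

lemma one_lt_deg_attachPorts (hnew : ∀ v ∈ nodes G, pmap v ∉ nodes G) {w : Node}
    (hw : w ∈ nodes G) : 1 < deg (attachPorts G pmap) w := by
  obtain ⟨e, he, hwe⟩ := mem_biUnion.1 hw
  refine one_lt_card.2 ⟨e, mem_filter.2 ⟨mem_attachPorts_of_mem he, hwe⟩,
    {w, pmap w}, mem_filter.2 ⟨pendant_mem_attachPorts hw, by simp⟩,
    fun h => hnew w hw (mem_nodes_of_mem he ?_)⟩
  simp [h]

lemma ports_attachPorts (hinj : Set.InjOn pmap (nodes G))
    (hnew : ∀ v ∈ nodes G, pmap v ∉ nodes G) :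
    ports (attachPorts G pmap) = (nodes G).image pmap := by
  rw [ports, nodes_attachPorts, filter_union, filter_false_of_mem, filter_true_of_mem,
    empty_union]
  · intro _ h
    obtain ⟨w, hw, rfl⟩ := mem_image.1 h
    exact deg_attachPorts_pmap hinj hnew hw
  · intro w hw
    exact (one_lt_deg_attachPorts hnew hw).ne'

lemma internal_attachPorts (hinj : Set.InjOn pmap (nodes G))
    (hnew : ∀ v ∈ nodes G, pmap v ∉ nodes G) :
    internal (attachPorts G pmap) = nodes G := by
  rw [internal, nodes_attachPorts, filter_union, filter_true_of_mem, filter_false_of_mem,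
    union_empty]
  · intro _ h
    obtain ⟨w, hw, rfl⟩ := mem_image.1 h
    exact not_not.2 (deg_attachPorts_pmap hinj hnew hw)
  · intro w hw
    exact (one_lt_deg_attachPorts hnew hw).ne'

lemma mem_of_isKekule_attachPorts (hG : IsGraph G) (hinj : Set.InjOn pmap (nodes G))
    (hnew : ∀ v ∈ nodes G, pmap v ∉ nodes G) {u v : Node} (hu : u ∈ nodes G)
    (hv : v ∈ nodes G) {W : Graph} (hW : IsKekule (attachPorts G pmap) W)
    (hrest : rest W ((nodes G).image pmap) = (nodes G).image pmap \ {pmap u, pmap v}) :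
    {u, v} ∈ G := by
  have hint := internal_attachPorts hinj hnew
  have pendant_mem : ∀ w ∈ nodes G, w ≠ u → w ≠ v → {w, pmap w} ∈ W := by
    intro w hw hwu hwv
    have hpw : pmap w ∈ rest W ((nodes G).image pmap) := by
      rw [hrest, mem_sdiff, mem_insert, mem_singleton]
      refine ⟨mem_image_of_mem _ hw, ?_⟩
      rintro (h | h)
      exacts [hwu (hinj hw hu h), hwv (hinj hw hv h)]
    obtain ⟨e, he, hpe⟩ := mem_biUnion.1 (mem_inter.1 hpw).2
    rwa [← eq_pendant_of_pmap_mem hinj hnew hw (hW.1 he) hpe]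
  have pendant_u_notMem : {u, pmap u} ∉ W := by
    intro h
    have hpu : pmap u ∈ rest W ((nodes G).image pmap) :=
      mem_inter.2 ⟨mem_image_of_mem _ hu, mem_biUnion.2 ⟨_, h, by simp⟩⟩
    rw [hrest] at hpu
    exact (mem_sdiff.1 hpu).2 (by simp)
  obtain ⟨e, he, hue⟩ := hW.exists_mem (hint ▸ hu)
  have heG : e ∈ G := by
    rcases mem_attachPorts.1 (hW.1 he) with heG | ⟨w, hw, rfl⟩
    · exact heG
    · simp only [mem_insert, mem_singleton] at hue
      rcases hue with rfl | rfl
      · exact absurd he pendant_u_notMem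
      · exact absurd hu (hnew w hw)
  obtain ⟨x, hxu, rfl⟩ := exists_eq_pair_of_card_eq_two (hG e heG) hue
  have hx : x ∈ nodes G := mem_nodes_of_mem heG (by simp)
  suffices x = v by rwa [← this]
  by_contra hxv
  have hex : {u, x} = {x, pmap x} := hW.eq_of_mem (hint ▸ hx) he (pendant_mem x hx hxu hxv)
    (by simp) (by simp)
  exact hnew x hx (mem_nodes_of_mem heG (by simp [hex]))

end attachPorts

theorem statement16_general (G : Graph) (hG : IsGraph G)
    (pmap : Node → Node)
    (hinj : Set.InjOn pmap (nodes G))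
    (hnew : ∀ v ∈ nodes G, pmap v ∉ nodes G)
    (G' : Graph)
    (hG' : G' = G ∪ (nodes G).image (fun v => ({v, pmap v} : Finset Node)))
    (homni : Omniconjugated G') :
    ∀ u ∈ nodes G, ∀ v ∈ nodes G, u ≠ v → ({u, v} : Finset Node) ∈ G := by
  intro u hu v hv huv
  obtain rfl : G' = attachPorts G pmap := hG'
  have hpair : {pmap u, pmap v} ⊆ (nodes G).image pmap :=
    insert_subset (mem_image_of_mem _ hu) (singleton_subset_iff.2 (mem_image_of_mem _ hv))
  have hcard : ({pmap u, pmap v} : Finset Node).card = 2 :=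
    card_pair fun h => huv (hinj hu hv h)
  have hparity : ((nodes G).image pmap \ {pmap u, pmap v}).card % 2
      = sig (attachPorts G pmap) := by
    have htwo := hcard ▸ card_le_card hpair
    rw [card_image_of_injOn hinj] at htwo
    rw [card_sdiff_of_subset hpair, card_image_of_injOn hinj, hcard, sig,
      internal_attachPorts hinj hnew]
    omega
  obtain ⟨W, hW, hrest⟩ :
      (nodes G).image pmap \ {pmap u, pmap v} ∈ KP (attachPorts G pmap) := by
    rw [homni.2, ports_attachPorts hinj hnew]
    exact ⟨sdiff_subset, hparity⟩
  rw [ports_attachPorts hinj hnew] at hrest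
  exact mem_of_isKekule_attachPorts hG hinj hnew hu hv hW hrest

/-- If attaching a new port to every node of `G` yields an
omniconjugated graph, then `G` is complete. -/
theorem statement16 (G : Graph) (hG : IsGraph G) (hn : 2 ≤ (nodes G).card)
    (pmap : Node → Node)
    (hinj : Set.InjOn pmap (nodes G))
    (hnew : ∀ v ∈ nodes G, pmap v ∉ nodes G)
    (G' : Graph)
    (hG' : G' = G ∪ (nodes G).image (fun v => ({v, pmap v} : Finset Node)))
    (homni : Omniconjugated G') :
    ∀ u ∈ nodes G, ∀ v ∈ nodes G, u ≠ v → ({u, v} : Finset Node) ∈ G :=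
  statement16_general G hG pmap hinj hnew G' hG' homni

end Kekule
end

section
/- Let G be an omniconjugated graph and let E be a finite set of edges, each consisting of two distinct internal nodes of G. Then the graph G ∪ E is omniconjugated. -/
open scoped symmDiff

namespace Kekule

/-! In a Kekulé state `W` every node of `W` has degree one in `W` (ports because they already
have degree one in the whole graph), so the handshake identity gives `#nodes W = 2 · #W`; as
`nodes W` is the disjoint union of the internal nodes and the occupied ports, every Kekulé port
assignment has parity `sG`. Edges between internal nodes change neither ports nor internal nodes
and keep every Kekulé state of `G` Kekulé, so `KP (G ∪ E)` contains `KP G`, which already consists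
of all port assignments of that parity. -/

section Basic

variable {G H W : Graph} {v : Node}

lemma mem_nodes : v ∈ nodes G ↔ ∃ e ∈ G, v ∈ e := by
  simp [nodes]

lemma nodes_mono (h : W ⊆ H) : nodes W ⊆ nodes H :=
  Finset.biUnion_subset_biUnion_of_subset_left _ h

lemma nodes_union (E : Graph) : nodes (G ∪ E) = nodes G ∪ nodes E :=
  Finset.union_biUnion

lemma deg_mono (h : W ⊆ H) (v : Node) : deg W v ≤ deg H v :=
  Finset.card_le_card (Finset.filter_subset_filter _ h)

lemma deg_pos_iff_mem_nodes : 0 < deg G v ↔ v ∈ nodes G := by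
  rw [mem_nodes, deg, Finset.card_pos, Finset.filter_nonempty_iff]

lemma deg_union_of_forall_notMem {E : Graph} (hv : ∀ e ∈ E, v ∉ e) :
    deg (G ∪ E) v = deg G v := by
  rw [deg, Finset.filter_union, Finset.filter_eq_empty_iff.mpr hv, Finset.union_empty, deg]

lemma IsGraph.mono (hH : IsGraph H) (h : W ⊆ H) : IsGraph W :=
  fun e he => hH e (h he)

lemma IsGraph.sum_deg_eq_two_mul_card (hG : IsGraph G) :
    ∑ v ∈ nodes G, deg G v = 2 * G.card := by
  calc ∑ v ∈ nodes G, deg G v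
      = ∑ e ∈ G, ((nodes G).filter (· ∈ e)).card :=
        Finset.sum_card_bipartiteAbove_eq_sum_card_bipartiteBelow (fun v e => v ∈ e)
    _ = ∑ e ∈ G, 2 := Finset.sum_congr rfl fun e he => by
        rw [Finset.filter_mem_eq_inter, Finset.inter_eq_right.mpr
          fun v hv => mem_nodes.mpr ⟨e, he, hv⟩, hG e he]
    _ = 2 * G.card := by rw [Finset.sum_const, smul_eq_mul, mul_comm]

end Basic

section KekuleStates

variable {H W : Graph}

lemma IsKekule.deg_eq_one (hW : IsKekule H W) {v : Node} (hv : v ∈ nodes W) : deg W v = 1 := by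
  by_cases hport : deg H v = 1
  · have := deg_mono hW.1 v
    have := deg_pos_iff_mem_nodes.mpr hv
    omega
  · exact hW.2 v (Finset.mem_filter.mpr ⟨nodes_mono hW.1 hv, hport⟩)

lemma IsKekule.nodes_eq_internal_union_rest (hW : IsKekule H W) :
    nodes W = internal H ∪ rest W (ports H) := by
  ext v
  simp only [internal, rest, ports, Finset.mem_union, Finset.mem_inter, Finset.mem_filter]
  constructor
  · intro hv
    have hvH := nodes_mono hW.1 hv
    tauto
  · rintro (⟨hvH, hint⟩ | ⟨-, hv⟩)
    · exact deg_pos_iff_mem_nodes.mp (by rw [hW.2 v (Finset.mem_filter.mpr ⟨hvH, hint⟩)]; simp)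
    · exact hv

lemma IsKekule.card_rest_ports_mod_two (hH : IsGraph H) (hW : IsKekule H W) :
    (rest W (ports H)).card % 2 = sig H := by
  have hdisj : Disjoint (internal H) (rest W (ports H)) := by
    rw [Finset.disjoint_left]
    intro v hint hport
    exact (Finset.mem_filter.mp hint).2 (Finset.mem_filter.mp (Finset.mem_inter.mp hport).1).2
  have hcard : (nodes W).card = 2 * W.card := by
    rw [← (hH.mono hW.1).sum_deg_eq_two_mul_card, Finset.card_eq_sum_ones]
    exact Finset.sum_congr rfl fun v hv => (hW.deg_eq_one hv).symm
  rw [hW.nodes_eq_internal_union_rest, Finset.card_union_of_disjoint hdisj] at hcard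
  rw [sig]
  omega

lemma KP_subset_of_parity (hH : IsGraph H) :
    KP H ⊆ {g | g ⊆ ports H ∧ g.card % 2 = sig H} := by
  rintro g ⟨W, hW, rfl⟩
  exact ⟨Finset.inter_subset_left, hW.card_rest_ports_mod_two hH⟩

end KekuleStates

section InternalEdges

variable {G E : Graph}

lemma deg_union_eq_one_iff (hE : ∀ e ∈ E, e ⊆ internal G) {v : Node} (hv : v ∈ nodes G) :
    deg (G ∪ E) v = 1 ↔ deg G v = 1 := by
  refine ⟨fun h => ?_, fun h => ?_⟩
  · have := deg_mono (Finset.subset_union_left : G ⊆ G ∪ E) v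
    have := deg_pos_iff_mem_nodes.mpr hv
    omega
  · rw [deg_union_of_forall_notMem fun e he hve => ?_, h]
    exact (Finset.mem_filter.mp (hE e he hve)).2 h

lemma nodes_union_of_subset_internal (hE : ∀ e ∈ E, e ⊆ internal G) :
    nodes (G ∪ E) = nodes G := by
  refine (nodes_union E).trans (Finset.union_eq_left.mpr fun v hv => ?_)
  obtain ⟨e, he, hve⟩ := mem_nodes.mp hv
  exact Finset.filter_subset _ _ (hE e he hve)

lemma ports_union_of_subset_internal (hE : ∀ e ∈ E, e ⊆ internal G) :
    ports (G ∪ E) = ports G := by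
  ext v
  simp only [ports, Finset.mem_filter, nodes_union_of_subset_internal hE]
  exact and_congr_right (deg_union_eq_one_iff hE)

lemma internal_union_of_subset_internal (hE : ∀ e ∈ E, e ⊆ internal G) :
    internal (G ∪ E) = internal G := by
  ext v
  simp only [internal, Finset.mem_filter, nodes_union_of_subset_internal hE]
  exact and_congr_right fun hv => not_congr (deg_union_eq_one_iff hE hv)

lemma KP_subset_KP_union (hE : ∀ e ∈ E, e ⊆ internal G) : KP G ⊆ KP (G ∪ E) := by
  rintro g ⟨W, ⟨hWG, hW⟩, rfl⟩
  refine ⟨W, ⟨hWG.trans Finset.subset_union_left, ?_⟩, by rw [ports_union_of_subset_internal hE]⟩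
  rwa [internal_union_of_subset_internal hE]

end InternalEdges

/-- Adding edges between internal nodes of an omniconjugated
graph preserves omniconjugation. -/
theorem statement17 (G : Graph) (hG : IsGraph G) (homni : Omniconjugated G)
    (E : Finset (Finset Node))
    (hE : ∀ e ∈ E, ∃ u ∈ internal G, ∃ v ∈ internal G, u ≠ v ∧ e = {u, v}) :
    Omniconjugated (G ∪ E) := by
  have hEint : ∀ e ∈ E, e ⊆ internal G := by
    intro e he
    obtain ⟨u, hu, v, hv, -, rfl⟩ := hE e he
    exact Finset.insert_subset hu (Finset.singleton_subset_iff.mpr hv)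
  have hgraph : IsGraph (G ∪ E) := by
    intro e he
    rcases Finset.mem_union.mp he with he | he
    · exact hG e he
    · obtain ⟨u, -, v, -, huv, rfl⟩ := hE e he
      exact Finset.card_pair huv
  have hports := ports_union_of_subset_internal hEint
  have hsig : sig (G ∪ E) = sig G := by rw [sig, sig, internal_union_of_subset_internal hEint]
  refine ⟨hports ▸ homni.1, (KP_subset_of_parity hgraph).antisymm ?_⟩
  rw [hports, hsig, ← homni.2]
  exact KP_subset_KP_union hEint

end Kekule
end
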